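/- Let the block matrix [[A, X],[X*, B]] in M_{2n} be positive semidefinite, with A, B, X ∈ M_n. Then for every s > 0 there exists a unitary matrix U ∈ M_n such that |X| ≤ (s/2) U* A U + (1/(2s)) B, where |X| = (X*X)^{1/2}. -/

import Mathlib

open Matrix Set ComplexOrder

variable {m : Type*}

/-- The modulus `|X| = (XᴴX)^{1/2}` of a matrix. -/
noncomputable def matAbs [Fintype m] [DecidableEq m] (X : Matrix m m ℂ) : Matrix m m ℂ :=
  (Matrix.posSemidef_conjTranspose_mul_self X).1.eigenvectorUnitary.1 *
    diagonal ((↑) ∘ (√·) ∘ (Matrix.posSemidef_conjTranspose_mul_self X).1.eigenvalues) *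
    (star (Matrix.posSemidef_conjTranspose_mul_self X).1.eigenvectorUnitary : Matrix m m ℂ)

theorem matAbs_posSemidef [Fintype m] [DecidableEq m] (X : Matrix m m ℂ) :
    (matAbs X).PosSemidef :=
  (PosSemidef.diagonal (fun i => by simp [Complex.zero_le_real])).mul_mul_conjTranspose_same _

/-- Functional calculus: apply `f : ℝ → ℝ` to a Hermitian matrix via its spectral
decomposition (junk value `0` for non-Hermitian input). -/
noncomputable def matFun [Fintype m] [DecidableEq m] (f : ℝ → ℝ) (X : Matrix m m ℂ) :
    Matrix m m ℂ :=
  if h : X.IsHermitian then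
    (h.eigenvectorUnitary : Matrix m m ℂ) *
      Matrix.diagonal (fun i => (f (h.eigenvalues i) : ℂ)) *
      star (h.eigenvectorUnitary : Matrix m m ℂ)
  else 0

/-- Real part `Re A = (A + Aᴴ)/2`. -/
noncomputable def reM (A : Matrix m m ℂ) : Matrix m m ℂ := (1/2 : ℂ) • (A + Aᴴ)

/-- Imaginary part `Im A = (A - Aᴴ)/(2i)`. -/
noncomputable def imM (A : Matrix m m ℂ) : Matrix m m ℂ := (1/(2*Complex.I)) • (A - Aᴴ)

/-- Numerical range `W(A) = {x* A x : x*x = 1}`. -/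
def numRange [Fintype m] (A : Matrix m m ℂ) : Set ℂ :=
  {z | ∃ x : m → ℂ, star x ⬝ᵥ x = 1 ∧ z = star x ⬝ᵥ A.mulVec x}

/-- The sector `S_α = {z : Re z ≥ 0, |Im z| ≤ (Re z) tan α}`. -/
def sector (α : ℝ) : Set ℂ := {z | 0 ≤ z.re ∧ |z.im| ≤ z.re * Real.tan α}

/-! Write `X = U |X|` with `U` unitary (polar decomposition). Compressing the positive block
matrix by the column `(s U; -1)` gives `s² U*AU - s (U*X + X*U) + B ≥ 0`, and since
`U*X = X*U = |X|` this is `2s` times the claimed inequality. -/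

theorem matAbs_conjTranspose_mul_self [Fintype m] [DecidableEq m] (X : Matrix m m ℂ) :
    (matAbs X)ᴴ * matAbs X = Xᴴ * X := by
  have hX := posSemidef_conjTranspose_mul_self X
  have hsq : diagonal ((↑) ∘ (√·) ∘ hX.1.eigenvalues) * diagonal ((↑) ∘ (√·) ∘ hX.1.eigenvalues)
      = diagonal (RCLike.ofReal ∘ hX.1.eigenvalues : m → ℂ) := by
    rw [diagonal_mul_diagonal]
    congr 1
    funext i
    simp [← Complex.ofReal_mul, Real.mul_self_sqrt (hX.eigenvalues_nonneg i)]
  rw [(matAbs_posSemidef X).1.eq, hX.1.spectral_theorem, ← hsq, map_mul]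
  rfl

section Polar

variable {𝕜 : Type*} [RCLike 𝕜]

open LinearMap in
theorem LinearMap.exists_linearIsometryEquiv_apply_eq {W V : Type*} [AddCommGroup W]
    [Module 𝕜 W] [NormedAddCommGroup V] [InnerProductSpace 𝕜 V] [FiniteDimensional 𝕜 V]
    (S T : W →ₗ[𝕜] V) (h : ∀ w, ‖S w‖ = ‖T w‖) : ∃ U : V ≃ₗᵢ[𝕜] V, ∀ w, U (T w) = S w := by
  have hker : ker T ≤ ker S := fun w hw => by
    rwa [mem_ker, ← norm_eq_zero, h, norm_eq_zero, ← mem_ker]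
  let L₀ : range T →ₗ[𝕜] V := (ker T).liftQ S hker ∘ₗ T.quotKerEquivRange.symm.toLinearMap
  have hL₀ : ∀ w, L₀ ⟨T w, mem_range_self T w⟩ = S w := fun w => by
    simp [L₀, quotKerEquivRange_symm_apply_image]
  let L : range T →ₗᵢ[𝕜] V := ⟨L₀, by rintro ⟨-, w, rfl⟩; rw [hL₀, h]; rfl⟩
  refine ⟨L.extend.toLinearIsometryEquiv rfl, fun w => ?_⟩
  rw [LinearIsometry.toLinearIsometryEquiv_apply]
  exact (L.extend_apply ⟨T w, mem_range_self T w⟩).trans (hL₀ w)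

theorem Matrix.exists_mem_unitaryGroup_eq_mul_of_conjTranspose_mul_self_eq {m : Type*}
    [Fintype m] [DecidableEq m] {X P : Matrix m m 𝕜} (h : Xᴴ * X = Pᴴ * P) :
    ∃ U ∈ unitaryGroup m 𝕜, X = U * P := by
  let φ := toEuclideanCLM (n := m) (𝕜 := 𝕜)
  have hφ : ∀ Y, ContinuousLinearMap.adjoint (φ Y) ∘L φ Y = φ (Yᴴ * Y) := fun Y => by
    rw [map_mul, ← star_eq_conjTranspose, map_star]
    rfl
  have hnorm : ∀ v, ‖φ X v‖ = ‖φ P v‖ := fun v => by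
    rw [ContinuousLinearMap.apply_norm_eq_sqrt_inner_adjoint_left,
      ContinuousLinearMap.apply_norm_eq_sqrt_inner_adjoint_left, hφ, hφ, h]
  obtain ⟨e, he⟩ :=
    LinearMap.exists_linearIsometryEquiv_apply_eq (φ X).toLinearMap (φ P).toLinearMap hnorm
  refine ⟨φ.symm e, Unitary.map_mem φ.symm (Unitary.linearIsometryEquiv.symm e).2,
    φ.injective ?_⟩
  change φ X = φ (φ.symm e * P)
  rw [map_mul, φ.apply_symm_apply]
  ext1 v
  exact (he v).symm

end Polar

theorem Matrix.PosSemidef.conjTranspose_fromRows_mul_fromBlocks_mul_fromRows {m n R : Type*}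
    [Fintype m] [Finite n] [Ring R] [PartialOrder R] [StarRing R]
    {A₁₁ A₁₂ A₂₁ A₂₂ : Matrix m m R} (h : (fromBlocks A₁₁ A₁₂ A₂₁ A₂₂).PosSemidef)
    (C D : Matrix m n R) :
    (Cᴴ * A₁₁ * C + Dᴴ * A₂₁ * C + (Cᴴ * A₁₂ * D + Dᴴ * A₂₂ * D)).PosSemidef := by
  have := h.conjTranspose_mul_mul_same (fromRows C D)
  rwa [conjTranspose_fromRows_eq_fromCols_conjTranspose, fromCols_mul_fromBlocks,
    fromCols_mul_fromRows, Matrix.add_mul, Matrix.add_mul] at this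

theorem block_psd_abs_le_left {n : ℕ} (A B X : Matrix (Fin n) (Fin n) ℂ)
    (h : (Matrix.fromBlocks A X Xᴴ B).PosSemidef) :
    ∀ s : ℝ, 0 < s → ∃ U ∈ Matrix.unitaryGroup (Fin n) ℂ,
      ((s/2) • (Uᴴ * A * U) + (1/(2*s)) • B - matAbs X).PosSemidef := by
  intro s hs
  obtain ⟨U, hU, hXUP⟩ := exists_mem_unitaryGroup_eq_mul_of_conjTranspose_mul_self_eq
    (matAbs_conjTranspose_mul_self X).symm
  set P := matAbs X
  have hUU : Uᴴ * U = 1 := mem_unitaryGroup_iff'.mp hU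
  have hUX : Uᴴ * X = P := by rw [hXUP, ← Matrix.mul_assoc, hUU, Matrix.one_mul]
  have hXU : Xᴴ * U = P := by
    rw [hXUP, conjTranspose_mul, (matAbs_posSemidef X).1.eq, Matrix.mul_assoc, hUU,
      Matrix.mul_one]
  refine ⟨U, hU, ?_⟩
  convert (h.conjTranspose_fromRows_mul_fromBlocks_mul_fromRows (s • U) (-1)).smul
    (by positivity : 0 ≤ 1 / (2 * s)) using 1
  simp only [conjTranspose_smul, conjTranspose_neg, conjTranspose_one, star_trivial,
    Matrix.smul_mul, Matrix.mul_smul, Matrix.mul_neg, Matrix.neg_mul, Matrix.mul_one,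
    Matrix.one_mul, neg_neg, hUX, hXU]
  match_scalars <;> field_simp
  norm_num
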